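/- arXiv:1012.1016 — 2 statements merged into one kernel-verified Lean document; each statement's English description precedes it below -/
import Mathlib

section
/- Let K be an algebraically closed field and n ≥ 3. The ideal I_{2,n} generated by all 2×2 minors of the reduced Kalman matrix for d = 2 equals the ideal generated by the (n−2 choose 2) quadrics a_{i1}a_{j2} − a_{i2}a_{j1} for 3 ≤ i < j ≤ n together with the (n−1 choose 2) cubics a_{11}a_{i2}a_{j1} − a_{12}a_{i1}a_{j1} + a_{21}a_{i2}a_{j2} − a_{22}a_{i1}a_{j2} for 3 ≤ i ≤ j ≤ n. -/
/-!
The rows of the reduced Kalman matrix are the rows `x_s` of `A21` and their images `x_s A11`.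
Writing `u ∧ v = u₀v₁ - u₁v₀`, its `2 × 2` minors are `x_s ∧ x_t`, `±(x_t A11) ∧ x_s` and
`(x_s A11) ∧ (x_t A11) = det A11 · (x_s ∧ x_t)`. The last kind lies in the ideal of the
quadrics, antisymmetry of `∧` reduces the quadrics to `s < t`, and
`(x_s A11) ∧ x_t = (x_t A11) ∧ x_s + tr A11 · (x_s ∧ x_t)` reduces the cubics to `s ≤ t`.
-/

open Matrix MvPolynomial

/-- The reduced Kalman matrix built from a `d × d` block `A11` and an `m × d` block `A21`: the
vertical stacking of the blocks `A21 * A11 ^ i` for `i = 0, 1, …, d - 1`. -/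
noncomputable def reducedKalman {R : Type*} [CommRing R] {d m : ℕ}
    (A11 : Matrix (Fin d) (Fin d) R) (A21 : Matrix (Fin m) (Fin d) R) :
    Matrix (Fin d × Fin m) (Fin d) R :=
  fun p j => (A21 * A11 ^ (p.1 : ℕ)) p.2 j

/-- The generic upper-left `2 × 2` block of the generic `n × n` matrix `(a_{ij})`. -/
noncomputable def genA11 (K : Type*) [CommSemiring K] (n : ℕ) (hn : 3 ≤ n) :
    Matrix (Fin 2) (Fin 2) (MvPolynomial (Fin n × Fin n) K) :=
  fun i j => X (⟨(i : ℕ), by have := i.isLt; omega⟩, ⟨(j : ℕ), by have := j.isLt; omega⟩)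

/-- The generic lower-left `(n-2) × 2` block of the generic `n × n` matrix `(a_{ij})`. -/
noncomputable def genA21 (K : Type*) [CommSemiring K] (n : ℕ) (hn : 3 ≤ n) :
    Matrix (Fin (n - 2)) (Fin 2) (MvPolynomial (Fin n × Fin n) K) :=
  fun r j => X (⟨2 + (r : ℕ), by have := r.isLt; omega⟩, ⟨(j : ℕ), by have := j.isLt; omega⟩)

section Wedge

variable {R : Type*} [CommRing R]

def wedge (u v : Fin 2 → R) : R := u 0 * v 1 - u 1 * v 0

lemma wedge_self (u : Fin 2 → R) : wedge u u = 0 := by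
  rw [wedge]; ring

lemma wedge_comm (u v : Fin 2 → R) : wedge v u = -wedge u v := by
  rw [wedge, wedge]; ring

lemma wedge_vecMul_vecMul (A : Matrix (Fin 2) (Fin 2) R) (u v : Fin 2 → R) :
    wedge (u ᵥ* A) (v ᵥ* A) = A.det * wedge u v := by
  simp only [wedge, det_fin_two, vecMul, dotProduct, Fin.sum_univ_two]; ring

lemma wedge_vecMul_left_comm (A : Matrix (Fin 2) (Fin 2) R) (u v : Fin 2 → R) :
    wedge (u ᵥ* A) v = wedge (v ᵥ* A) u + A.trace * wedge u v := by
  simp only [wedge, trace_fin_two, vecMul, dotProduct, Fin.sum_univ_two]; ring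

lemma wedge_vecMul_left (A : Matrix (Fin 2) (Fin 2) R) (u v : Fin 2 → R) :
    wedge (v ᵥ* A) u
      = A 0 0 * u 1 * v 0 - A 0 1 * u 0 * v 0 + A 1 0 * u 1 * v 1 - A 1 1 * u 0 * v 1 := by
  simp only [wedge, vecMul, dotProduct, Fin.sum_univ_two]; ring

lemma det_submatrix_fin_two {ι : Type*} (M : Matrix ι (Fin 2) R) (r : Fin 2 → ι) :
    (M.submatrix r id).det = wedge (M (r 0)) (M (r 1)) := by
  rw [det_fin_two]; rfl

end Wedge

section ReducedKalman

variable {R : Type*} [CommRing R] {m : ℕ}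
  (A : Matrix (Fin 2) (Fin 2) R) (B : Matrix (Fin m) (Fin 2) R)

lemma reducedKalman_zero (s : Fin m) : reducedKalman A B (0, s) = B s := by
  ext j; simp [reducedKalman]

lemma reducedKalman_one (s : Fin m) : reducedKalman A B (1, s) = B s ᵥ* A := by
  ext j; simp [reducedKalman, mul_apply, vecMul, dotProduct]

def kalmanGeneratorIdeal : Ideal R :=
  Ideal.span ({p | ∃ s t : Fin m, s < t ∧ p = wedge (B s) (B t)}
    ∪ {p | ∃ s t : Fin m, s ≤ t ∧ p = wedge (B t ᵥ* A) (B s)})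

lemma wedge_mem_kalmanGeneratorIdeal (s t : Fin m) :
    wedge (B s) (B t) ∈ kalmanGeneratorIdeal A B := by
  rcases lt_trichotomy s t with h | rfl | h
  · exact Ideal.subset_span (Or.inl ⟨s, t, h, rfl⟩)
  · rw [wedge_self]; exact zero_mem _
  · rw [wedge_comm]; exact neg_mem (Ideal.subset_span (Or.inl ⟨t, s, h, rfl⟩))

lemma wedge_vecMul_mem_kalmanGeneratorIdeal (s t : Fin m) :
    wedge (B t ᵥ* A) (B s) ∈ kalmanGeneratorIdeal A B := by
  rcases le_or_gt s t with h | h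
  · exact Ideal.subset_span (Or.inr ⟨s, t, h, rfl⟩)
  · rw [wedge_vecMul_left_comm]
    exact add_mem (Ideal.subset_span (Or.inr ⟨t, s, h.le, rfl⟩))
      (Ideal.mul_mem_left _ _ (wedge_mem_kalmanGeneratorIdeal A B t s))

lemma wedge_reducedKalman_mem_kalmanGeneratorIdeal (p q : Fin 2 × Fin m) :
    wedge (reducedKalman A B p) (reducedKalman A B q) ∈ kalmanGeneratorIdeal A B := by
  obtain ⟨a, s⟩ := p
  obtain ⟨b, t⟩ := q
  fin_cases a <;> fin_cases b <;>
    simp only [Fin.zero_eta, Fin.mk_one, reducedKalman_zero, reducedKalman_one]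
  · exact wedge_mem_kalmanGeneratorIdeal A B s t
  · rw [wedge_comm]; exact neg_mem (wedge_vecMul_mem_kalmanGeneratorIdeal A B s t)
  · exact wedge_vecMul_mem_kalmanGeneratorIdeal A B t s
  · rw [wedge_vecMul_vecMul]
    exact Ideal.mul_mem_left _ _ (wedge_mem_kalmanGeneratorIdeal A B s t)

theorem span_minors_reducedKalman :
    Ideal.span (Set.range fun r : Fin 2 → Fin 2 × Fin m =>
      ((reducedKalman A B).submatrix r id).det) = kalmanGeneratorIdeal A B := by
  apply le_antisymm
  · rw [Ideal.span_le]
    rintro _ ⟨r, rfl⟩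
    dsimp only
    rw [det_submatrix_fin_two]
    exact wedge_reducedKalman_mem_kalmanGeneratorIdeal A B (r 0) (r 1)
  · rw [kalmanGeneratorIdeal, Ideal.span_le]
    rintro _ (⟨s, t, -, rfl⟩ | ⟨s, t, -, rfl⟩)
    · refine Ideal.subset_span ⟨![(0, s), (0, t)], ?_⟩
      dsimp only
      rw [det_submatrix_fin_two]
      simp [reducedKalman_zero]
    · refine Ideal.subset_span ⟨![(1, t), (0, s)], ?_⟩
      dsimp only
      rw [det_submatrix_fin_two]
      simp [reducedKalman_zero, reducedKalman_one]

end ReducedKalman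

section Reindex

variable {α : Type*} {n : ℕ}

lemma Fin.exists_eq_two_add (i : Fin n) (hi : 2 ≤ (i : ℕ)) :
    ∃ s : Fin (n - 2), i = ⟨2 + s, Nat.add_lt_of_lt_sub' s.isLt⟩ :=
  ⟨⟨i - 2, by omega⟩, Fin.ext (by simp only; omega)⟩

lemma setOf_exists_lt_two_add (F : Fin n → Fin n → α) :
    {p | ∃ s t : Fin (n - 2), s < t ∧ p = F ⟨2 + s, by omega⟩ ⟨2 + t, by omega⟩}
      = {p | ∃ i j : Fin n, 2 ≤ (i : ℕ) ∧ i < j ∧ p = F i j} := by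
  ext p
  constructor
  · rintro ⟨s, t, hst, rfl⟩
    exact ⟨_, _, Nat.le_add_right 2 s, Fin.mk_lt_mk.mpr (Nat.add_lt_add_left hst 2), rfl⟩
  · rintro ⟨i, j, hi, hij, rfl⟩
    obtain ⟨s, rfl⟩ := Fin.exists_eq_two_add i hi
    obtain ⟨t, rfl⟩ := Fin.exists_eq_two_add j (by rw [Fin.lt_def] at hij; omega)
    exact ⟨s, t, Nat.lt_of_add_lt_add_left (Fin.mk_lt_mk.mp hij), rfl⟩

lemma setOf_exists_le_two_add (F : Fin n → Fin n → α) :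
    {p | ∃ s t : Fin (n - 2), s ≤ t ∧ p = F ⟨2 + s, by omega⟩ ⟨2 + t, by omega⟩}
      = {p | ∃ i j : Fin n, 2 ≤ (i : ℕ) ∧ i ≤ j ∧ p = F i j} := by
  ext p
  constructor
  · rintro ⟨s, t, hst, rfl⟩
    exact ⟨_, _, Nat.le_add_right 2 s, Fin.mk_le_mk.mpr (Nat.add_le_add_left hst 2), rfl⟩
  · rintro ⟨i, j, hi, hij, rfl⟩
    obtain ⟨s, rfl⟩ := Fin.exists_eq_two_add i hi
    obtain ⟨t, rfl⟩ := Fin.exists_eq_two_add j (by rw [Fin.le_def] at hij; omega)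
    exact ⟨s, t, Nat.le_of_add_le_add_left (Fin.mk_le_mk.mp hij), rfl⟩

end Reindex

/-- The ideal `I_{2,n}` of `2 × 2` minors of the reduced Kalman matrix for `d = 2` equals the
ideal generated by the quadrics `a_{i1}a_{j2} - a_{i2}a_{j1}` (for `3 ≤ i < j ≤ n`, here written
with 0-based indices) and the cubics
`a_{11}a_{i2}a_{j1} - a_{12}a_{i1}a_{j1} + a_{21}a_{i2}a_{j2} - a_{22}a_{i1}a_{j2}`
(for `3 ≤ i ≤ j ≤ n`). -/
theorem stmt8 {K : Type*} [Field K] (n : ℕ) (hn : 3 ≤ n) :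
    Ideal.span (Set.range fun r : Fin 2 → Fin 2 × Fin (n - 2) =>
      ((reducedKalman (genA11 K n hn) (genA21 K n hn)).submatrix r id).det)
    = Ideal.span
        ({p : MvPolynomial (Fin n × Fin n) K | ∃ i j : Fin n, 2 ≤ (i : ℕ) ∧ i < j ∧
            p = X (i, (⟨0, by omega⟩ : Fin n)) * X (j, (⟨1, by omega⟩ : Fin n))
              - X (i, (⟨1, by omega⟩ : Fin n)) * X (j, (⟨0, by omega⟩ : Fin n))}
        ∪ {p : MvPolynomial (Fin n × Fin n) K | ∃ i j : Fin n, 2 ≤ (i : ℕ) ∧ i ≤ j ∧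
            p = X ((⟨0, by omega⟩ : Fin n), (⟨0, by omega⟩ : Fin n))
                  * X (i, (⟨1, by omega⟩ : Fin n)) * X (j, (⟨0, by omega⟩ : Fin n))
              - X ((⟨0, by omega⟩ : Fin n), (⟨1, by omega⟩ : Fin n))
                  * X (i, (⟨0, by omega⟩ : Fin n)) * X (j, (⟨0, by omega⟩ : Fin n))
              + X ((⟨1, by omega⟩ : Fin n), (⟨0, by omega⟩ : Fin n))
                  * X (i, (⟨1, by omega⟩ : Fin n)) * X (j, (⟨1, by omega⟩ : Fin n))
              - X ((⟨1, by omega⟩ : Fin n), (⟨1, by omega⟩ : Fin n))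
                  * X (i, (⟨0, by omega⟩ : Fin n)) * X (j, (⟨1, by omega⟩ : Fin n))}) := by
  rw [span_minors_reducedKalman, kalmanGeneratorIdeal, ← setOf_exists_lt_two_add,
    ← setOf_exists_le_two_add]
  simp only [wedge_vecMul_left]
  -- the entries of `genA11` and `genA21` are definitionally the variables of the statement
  rfl
end

section
/- Let K be a field, n ≥ 2, 1 ≤ d ≤ n−1, and take C = (0_{(n−d)×d} | I_{n−d}). Then the ideal of K[a_{11}, …, a_{nn}] generated by the n×n minors of the Kalman matrix of the generic n×n matrix A equals the ideal generated by the d×d minors of the small Kalman matrix of A. -/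
/-!
Put the block `C * A ^ 0 = (0 | 1)` on top and split the columns into the first `d` and the last
`n - d`: the Kalman matrix becomes `[[0, 1], [S, T]]` with `S` the small Kalman matrix. Subtracting
`T` times the top rows from the bottom ones is an invertible row operation, so it preserves the
ideal of maximal minors, and leaves `[[0, 1], [S, 0]]`. A maximal minor of that matrix vanishes
unless it uses each row of `(0 | 1)` exactly once, and then it is `±` a `d × d` minor of `S`.
-/

open Matrix MvPolynomial

/-- The Kalman matrix of `A` with respect to `C`: the `((d+1)(n-d)) × n` matrix obtained by
vertically stacking the blocks `C * A ^ i` for `i = 0, 1, …, d`. -/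
noncomputable def kalmanMatrix {R : Type*} [CommRing R] {n d : ℕ}
    (C : Matrix (Fin (n - d)) (Fin n) R) (A : Matrix (Fin n) (Fin n) R) :
    Matrix (Fin (d + 1) × Fin (n - d)) (Fin n) R :=
  fun p j => (C * A ^ (p.1 : ℕ)) p.2 j

/-- The `(n-d) × n` matrix `C = (0 | I)` consisting of an `(n-d) × d` zero block followed by an
`(n-d) × (n-d)` identity block. -/
def zeroIdMatrix (R : Type*) [CommRing R] (n d : ℕ) : Matrix (Fin (n - d)) (Fin n) R :=
  fun i j => if (j : ℕ) = d + (i : ℕ) then 1 else 0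

/-- The small Kalman matrix of `A`: the `d(n-d) × d` matrix obtained by vertically stacking the
blocks `[A^i]` for `i = 1, …, d`, where `[M]` is the submatrix of `M` formed by the last `n - d`
rows and the first `d` columns. -/
noncomputable def smallKalman {R : Type*} [CommRing R] {n d : ℕ} (hdn : d ≤ n)
    (A : Matrix (Fin n) (Fin n) R) : Matrix (Fin d × Fin (n - d)) (Fin d) R :=
  fun p j =>
    (A ^ ((p.1 : ℕ) + 1)) ⟨d + (p.2 : ℕ), by have := p.2.isLt; omega⟩
      ⟨(j : ℕ), by have := j.isLt; omega⟩

/-- The generic `n × n` matrix whose entries are the variables of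
`K[a_{11}, …, a_{nn}]`. -/
noncomputable def genMatrix (K : Type*) [CommSemiring K] (n : ℕ) :
    Matrix (Fin n) (Fin n) (MvPolynomial (Fin n × Fin n) K) :=
  fun i j => X (i, j)

namespace Matrix

variable {R : Type*} [CommRing R] {m m' ι ι' o : Type*}

section MaxMinorIdeal

variable [Fintype ι] [DecidableEq ι]

/-- Row selections `r` need not be injective or monotone: the extra
choices only contribute `0` or `±` a genuine minor. -/
def maxMinorIdeal (M : Matrix m ι R) : Ideal R :=
  Ideal.span (Set.range fun r : ι → m => (M.submatrix r id).det)

theorem det_submatrix_mem_maxMinorIdeal (M : Matrix m ι R) (r : ι → m) :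
    (M.submatrix r id).det ∈ M.maxMinorIdeal :=
  Ideal.subset_span ⟨r, rfl⟩

theorem maxMinorIdeal_le_iff {M : Matrix m ι R} {I : Ideal R} :
    M.maxMinorIdeal ≤ I ↔ ∀ r : ι → m, (M.submatrix r id).det ∈ I :=
  Ideal.span_le.trans Set.range_subset_iff

theorem det_submatrix_mul_eq_sum [Fintype m] (U : Matrix m' m R) (M : Matrix m ι R)
    (r : ι → m') :
    ((U * M).submatrix r id).det =
      ∑ s : ι → m, (∏ i, U (r i) (s i)) * (M.submatrix s id).det := by
  have hrows : (U * M).submatrix r id = fun i => ∑ k, U (r i) k • M k := by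
    ext i j
    simp [mul_apply, Finset.sum_apply]
  rw [hrows]
  change detRowAlternating.toMultilinearMap _ = _
  rw [MultilinearMap.map_sum]
  refine Finset.sum_congr rfl fun s _ => ?_
  rw [MultilinearMap.map_smul_univ]
  rfl

theorem maxMinorIdeal_mul_le [Fintype m] (U : Matrix m' m R) (M : Matrix m ι R) :
    (U * M).maxMinorIdeal ≤ M.maxMinorIdeal := by
  refine maxMinorIdeal_le_iff.mpr fun r => ?_
  rw [det_submatrix_mul_eq_sum]
  exact Ideal.sum_mem _ fun s _ => Ideal.mul_mem_left _ _ (det_submatrix_mem_maxMinorIdeal M s)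

theorem maxMinorIdeal_mul_of_isUnit [Fintype m] [DecidableEq m] {U : Matrix m m R}
    (hU : IsUnit U) (M : Matrix m ι R) : (U * M).maxMinorIdeal = M.maxMinorIdeal := by
  refine le_antisymm (maxMinorIdeal_mul_le U M) ?_
  calc M.maxMinorIdeal = (U⁻¹ * (U * M)).maxMinorIdeal := by
        rw [← Matrix.mul_assoc, nonsing_inv_mul _ ((isUnit_iff_isUnit_det U).mp hU),
          Matrix.one_mul]
    _ ≤ (U * M).maxMinorIdeal := maxMinorIdeal_mul_le _ _

theorem maxMinorIdeal_submatrix_of_surjective {e : m' → m} (he : Function.Surjective e)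
    (M : Matrix m ι R) : (M.submatrix e id).maxMinorIdeal = M.maxMinorIdeal := by
  apply le_antisymm <;> refine maxMinorIdeal_le_iff.mpr fun r => ?_
  · exact det_submatrix_mem_maxMinorIdeal M (e ∘ r)
  · have hr : M.submatrix r id = (M.submatrix e id).submatrix (Function.surjInv he ∘ r) id := by
      ext i j
      simp [Function.surjInv_eq he]
    rw [hr]
    exact det_submatrix_mem_maxMinorIdeal _ _

theorem maxMinorIdeal_submatrix_equiv [Fintype ι'] [DecidableEq ι'] (f : ι' ≃ ι)
    (M : Matrix m ι R) : (M.submatrix id f).maxMinorIdeal = M.maxMinorIdeal := by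
  apply le_antisymm <;> refine maxMinorIdeal_le_iff.mpr fun r => ?_
  · have hr :
        (M.submatrix id f).submatrix r id = (M.submatrix (r ∘ f.symm) id).submatrix f f := by
      ext i j
      simp
    rw [hr, det_submatrix_equiv_self]
    exact det_submatrix_mem_maxMinorIdeal _ _
  · have hr :
        M.submatrix r id = ((M.submatrix id f).submatrix (r ∘ f) id).submatrix f.symm f.symm := by
      ext i j
      simp
    rw [hr, det_submatrix_equiv_self]
    exact det_submatrix_mem_maxMinorIdeal _ _

end MaxMinorIdeal

variable [Fintype o] [DecidableEq o]

theorem exists_perm_comp_eq_sumElim [Fintype ι] {r : ι ⊕ o → o ⊕ m}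
    (hr : Function.Injective r) (hl : ∀ q, ∃ x, r x = Sum.inl q) :
    ∃ (e : Equiv.Perm (ι ⊕ o)) (s : ι → m), r ∘ e = Sum.elim (Sum.inr ∘ s) Sum.inl := by
  classical
  choose g hg using hl
  have hg_inj : Function.Injective g := fun q q' h => Sum.inl_injective (by rw [← hg, ← hg, h])
  have hcard : Fintype.card ι = Fintype.card ((Set.range g)ᶜ : Set (ι ⊕ o)) := by
    rw [Fintype.card_compl_set, Set.card_range_of_injective hg_inj, Fintype.card_sum]
    omega
  set eι := Fintype.equivOfCardEq hcard
  have hright : ∀ a, ∃ k, r (eι a) = Sum.inr k := by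
    intro a
    rcases h : r (eι a) with q | k
    · exact absurd ⟨q, hr ((hg q).trans h.symm)⟩ (eι a).2
    · exact ⟨k, rfl⟩
  choose s hs using hright
  refine ⟨((Equiv.sumCongr eι (Equiv.ofInjective g hg_inj)).trans (Equiv.sumComm _ _)).trans
    (Equiv.Set.sumCompl (Set.range g)), s, ?_⟩
  ext (a | q) <;> simp [hs, hg]

theorem maxMinorIdeal_fromBlocks_zero_one_zero [Fintype ι] [DecidableEq ι] (S : Matrix m ι R) :
    (fromBlocks (0 : Matrix o ι R) (1 : Matrix o o R) S 0).maxMinorIdeal = S.maxMinorIdeal := by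
  set N := fromBlocks (0 : Matrix o ι R) (1 : Matrix o o R) S 0
  have hblock : ∀ s : ι → m,
      N.submatrix (Sum.elim (Sum.inr ∘ s) Sum.inl) id = fromBlocks (S.submatrix s id) 0 0 1 := by
    intro s
    ext (i | i) (j | j) <;> simp [N]
  refine le_antisymm (maxMinorIdeal_le_iff.mpr fun r => ?_)
    (maxMinorIdeal_le_iff.mpr fun s => ?_)
  · by_cases hr : Function.Injective r
    · by_cases hl : ∀ q, ∃ x, r x = Sum.inl q
      · obtain ⟨e, s, hes⟩ := exists_perm_comp_eq_sumElim hr hl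
        have he :
            N.submatrix r id = (fromBlocks (S.submatrix s id) 0 0 1).submatrix e.symm id := by
          rw [← hblock, ← hes]
          ext
          simp
        rw [he, det_permute, det_fromBlocks_zero₂₁, det_one, mul_one]
        exact Ideal.mul_mem_left _ _ (det_submatrix_mem_maxMinorIdeal S s)
      · obtain ⟨q, hq⟩ := not_forall.mp hl
        rw [det_eq_zero_of_column_eq_zero (Sum.inr q) fun x => ?_]
        · exact zero_mem _
        rcases h : r x with q' | k
        · have hq' : q' ≠ q := by
            rintro rfl
            exact hq ⟨x, h⟩
          simp [N, h, hq']
        · simp [N, h]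
    · obtain ⟨i, j, hij, hne⟩ := Function.not_injective_iff.mp hr
      rw [det_zero_of_row_eq hne (funext fun k => by rw [submatrix_apply, submatrix_apply, hij])]
      exact zero_mem _
  · have hs := det_submatrix_mem_maxMinorIdeal N (Sum.elim (Sum.inr ∘ s) Sum.inl)
    rwa [hblock, det_fromBlocks_zero₂₁, det_one, mul_one] at hs

theorem fromBlocks_zero_one_eq_mul [Fintype m] [DecidableEq m] (S : Matrix m ι R)
    (T : Matrix m o R) :
    fromBlocks (0 : Matrix o ι R) (1 : Matrix o o R) S T =
      fromBlocks (1 : Matrix o o R) 0 T (1 : Matrix m m R) *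
        fromBlocks (0 : Matrix o ι R) (1 : Matrix o o R) S 0 := by
  simp [fromBlocks_multiply]

theorem maxMinorIdeal_fromBlocks_zero_one [Fintype ι] [DecidableEq ι] [Fintype m] [DecidableEq m]
    (S : Matrix m ι R) (T : Matrix m o R) :
    (fromBlocks (0 : Matrix o ι R) (1 : Matrix o o R) S T).maxMinorIdeal = S.maxMinorIdeal := by
  have hunit : IsUnit (fromBlocks (1 : Matrix o o R) 0 T (1 : Matrix m m R)) := by
    simp [isUnit_iff_isUnit_det]
  rw [fromBlocks_zero_one_eq_mul, maxMinorIdeal_mul_of_isUnit hunit,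
    maxMinorIdeal_fromBlocks_zero_one_zero]

end Matrix

section Kalman

variable {R : Type*} [CommRing R] {n d : ℕ}

def finSumFinSubEquiv (hdn : d ≤ n) : Fin d ⊕ Fin (n - d) ≃ Fin n :=
  finSumFinEquiv.trans (finCongr (Nat.add_sub_cancel' hdn))

theorem zeroIdMatrix_eq_submatrix_one (hdn : d ≤ n) :
    zeroIdMatrix R n d =
      (1 : Matrix (Fin n) (Fin n) R).submatrix (finSumFinSubEquiv hdn ∘ Sum.inr) id := by
  ext q j
  simp [zeroIdMatrix, finSumFinSubEquiv, one_apply, Fin.ext_iff, eq_comm]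

theorem zeroIdMatrix_mul (hdn : d ≤ n) (M : Matrix (Fin n) (Fin n) R) :
    zeroIdMatrix R n d * M = M.submatrix (finSumFinSubEquiv hdn ∘ Sum.inr) id := by
  rw [zeroIdMatrix_eq_submatrix_one hdn]
  exact one_submatrix_mul _ (Equiv.refl _) M

theorem kalmanMatrix_zeroIdMatrix_submatrix (hdn : d ≤ n) (A : Matrix (Fin n) (Fin n) R) :
    (kalmanMatrix (zeroIdMatrix R n d) A).submatrix
        (Sum.elim (fun q => (0, q)) (fun p => (p.1.succ, p.2))) (finSumFinSubEquiv hdn) =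
      fromBlocks 0 1 (smallKalman hdn A)
        (of fun p q => (A ^ ((p.1 : ℕ) + 1)) (finSumFinSubEquiv hdn (.inr p.2))
          (finSumFinSubEquiv hdn (.inr q))) := by
  ext (q | p) (j | j)
  · simp [kalmanMatrix, zeroIdMatrix_mul hdn, one_apply]
  · simp [kalmanMatrix, zeroIdMatrix_mul hdn, one_apply]
  · simp [kalmanMatrix, zeroIdMatrix_mul hdn, smallKalman]
    rfl
  · simp [kalmanMatrix, zeroIdMatrix_mul hdn]

theorem surjective_sumElim_zero_succ {β : Type*} :
    Function.Surjective
      (Sum.elim (fun q : β => ((0 : Fin (d + 1)), q)) fun p : Fin d × β => (p.1.succ, p.2)) := by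
  rintro ⟨i, q⟩
  induction i using Fin.cases with
  | zero => exact ⟨.inl q, rfl⟩
  | succ i => exact ⟨.inr (i, q), rfl⟩

theorem maxMinorIdeal_kalmanMatrix_zeroIdMatrix (hdn : d ≤ n) (A : Matrix (Fin n) (Fin n) R) :
    (kalmanMatrix (zeroIdMatrix R n d) A).maxMinorIdeal = (smallKalman hdn A).maxMinorIdeal := by
  rw [← maxMinorIdeal_submatrix_of_surjective surjective_sumElim_zero_succ,
    ← maxMinorIdeal_submatrix_equiv (finSumFinSubEquiv hdn), submatrix_submatrix,
    Function.id_comp, Function.comp_id, kalmanMatrix_zeroIdMatrix_submatrix,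
    maxMinorIdeal_fromBlocks_zero_one]

end Kalman

/-- For `C = (0 | I)`, the ideal generated by the `n × n` minors of the Kalman matrix of the
generic matrix equals the ideal generated by the `d × d` minors of the small Kalman matrix. -/
theorem stmt16 {K : Type*} [Field K] (n d : ℕ) (hd2 : d ≤ n - 1) :
    Ideal.span (Set.range fun r : Fin n → Fin (d + 1) × Fin (n - d) =>
        ((kalmanMatrix (zeroIdMatrix (MvPolynomial (Fin n × Fin n) K) n d)
            (genMatrix K n)).submatrix r id).det)
      = Ideal.span (Set.range fun r : Fin d → Fin d × Fin (n - d) =>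
          ((smallKalman (show d ≤ n by omega) (genMatrix K n)).submatrix r id).det) :=
  maxMinorIdeal_kalmanMatrix_zeroIdMatrix _ _
end
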